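/- arXiv:math/0104159 — 5 statements merged into one kernel-verified Lean document; each statement's English description precedes it below -/
import Mathlib

section
/- Let A = ι(a₁)⋯ι(a_r) and B = ι(b₁)⋯ι(b_s) be invertible blades in Cl(Q) such that every aᵢ is orthogonal to every bⱼ, i.e. polar Q aᵢ bⱼ = 0 for all i, j (so that A·B = A ∧ B). Then for every vector x ∈ M, P_B(P_A(ι x)) = 0, where P_C(X) = (1/2)·(X - α(C)·X·C⁻¹). -/
open CliffordAlgebra

/-- The inverse projection operator `P_A(X) = (1/2)·(X - α(A)·X·A⁻¹)` for invertible `A`. -/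
noncomputable def invProj {K M : Type*} [Field K] [Invertible (2 : K)]
    [AddCommGroup M] [Module K M] {Q : QuadraticForm K M}
    (A : CliffordAlgebra Q) [Invertible A] (X : CliffordAlgebra Q) : CliffordAlgebra Q :=
  ⅟(2 : K) • (X - involute A * X * ⅟A)

section Aux

variable {K M : Type*} [Field K] [AddCommGroup M] [Module K M] {Q : QuadraticForm K M}

private lemma step_aux (a v : M) (ha : Q a ≠ 0) :
    involute (ι Q a) * ι Q v
      = ι Q (v - ((Q a)⁻¹ * QuadraticMap.polar Q a v) • a) * ι Q a := by
  rw [involute_ι, map_sub, map_smul, sub_mul, smul_mul_assoc, ι_sq_scalar,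
    Algebra.smul_def, ← map_mul (algebraMap K _)]
  have hc : (Q a)⁻¹ * QuadraticMap.polar Q a v * Q a = QuadraticMap.polar Q a v := by
    field_simp
  rw [hc, eq_sub_iff_add_eq, ← ι_mul_ι_add_swap, neg_mul]
  abel

private lemma key_aux (l : List M) (hl : ∀ v ∈ l, Q v ≠ 0) (x : M) :
    ∃ x', x - x' ∈ Submodule.span K {v : M | v ∈ l} ∧
      involute ((l.map (ι Q)).prod) * ι Q x = ι Q x' * (l.map (ι Q)).prod := by
  induction l with
  | nil => exact ⟨x, by simp, by simp⟩
  | cons a l ih =>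
    obtain ⟨x', hx', heq⟩ := ih (fun v hv => hl v (List.mem_cons_of_mem a hv))
    refine ⟨x' - ((Q a)⁻¹ * QuadraticMap.polar Q a x') • a, ?_, ?_⟩
    · have h1 : x - (x' - ((Q a)⁻¹ * QuadraticMap.polar Q a x') • a)
        = (x - x') + ((Q a)⁻¹ * QuadraticMap.polar Q a x') • a := by abel
      rw [h1]
      refine Submodule.add_mem _ (Submodule.span_mono ?_ hx')
        (Submodule.smul_mem _ _ (Submodule.subset_span ?_))
      · intro v hv; exact List.mem_cons_of_mem a hv
      · exact List.mem_cons_self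
    · rw [List.map_cons, List.prod_cons, map_mul, mul_assoc, heq, ← mul_assoc,
        step_aux a x' (hl a (List.mem_cons_self)), mul_assoc]

private lemma fix_aux (l : List M) (hl : ∀ v ∈ l, Q v ≠ 0) (y : M)
    (hy : ∀ v ∈ l, QuadraticMap.polar Q v y = 0) :
    involute ((l.map (ι Q)).prod) * ι Q y = ι Q y * (l.map (ι Q)).prod := by
  induction l with
  | nil => simp
  | cons a l ih =>
    rw [List.map_cons, List.prod_cons, map_mul, mul_assoc,
      ih (fun v hv => hl v (List.mem_cons_of_mem a hv))
        (fun v hv => hy v (List.mem_cons_of_mem a hv)),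
      ← mul_assoc, step_aux a y (hl a (List.mem_cons_self)),
      hy a (List.mem_cons_self), mul_zero, zero_smul, sub_zero, mul_assoc]

end Aux

/-- If every vector of the blade `A` is orthogonal to every vector of the blade `B` (so `A·B = A ∧ B`), then `P_B(P_A(x)) = 0` for every vector `x`. -/
theorem invProj_invProj_eq_zero {K M : Type*} [Field K] [Invertible (2 : K)]
    [AddCommGroup M] [Module K M] {Q : QuadraticForm K M}
    {r s : ℕ} (a : Fin r → M) (b : Fin s → M)
    (A B : CliffordAlgebra Q) [Invertible A] [Invertible B]
    (hA : A = (List.ofFn fun i => ι Q (a i)).prod)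
    (hB : B = (List.ofFn fun j => ι Q (b j)).prod)
    (ha : ∀ i j, i ≠ j → QuadraticMap.polar Q (a i) (a j) = 0)
    (hb : ∀ i j, i ≠ j → QuadraticMap.polar Q (b i) (b j) = 0)
    (haQ : ∀ i, Q (a i) ≠ 0) (hbQ : ∀ j, Q (b j) ≠ 0)
    (hab : ∀ i j, QuadraticMap.polar Q (a i) (b j) = 0)
    (x : M) :
    invProj B (invProj A (ι Q x)) = 0 := by
  have hA' : A = ((List.ofFn a).map (ι Q)).prod := by rw [hA, List.map_ofFn]; rfl
  have hB' : B = ((List.ofFn b).map (ι Q)).prod := by rw [hB, List.map_ofFn]; rfl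
  have hlA : ∀ v ∈ List.ofFn a, Q v ≠ 0 := by
    intro v hv; obtain ⟨i, rfl⟩ := List.mem_ofFn.mp hv; exact haQ i
  have hlB : ∀ v ∈ List.ofFn b, Q v ≠ 0 := by
    intro v hv; obtain ⟨j, rfl⟩ := List.mem_ofFn.mp hv; exact hbQ j
  obtain ⟨x', hspan, heq⟩ := key_aux (List.ofFn a) hlA x
  have h1 : involute A * ι Q x * ⅟A = ι Q x' := by
    have h0 : involute A * ι Q x = ι Q x' * A := by rw [hA']; exact heq
    rw [h0, mul_assoc, mul_invOf_self, mul_one]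
  have hPA : invProj A (ι Q x) = ι Q (⅟(2:K) • (x - x')) := by
    rw [invProj, h1, ← map_sub, ← map_smul]
  set y := ⅟(2:K) • (x - x') with hy_def
  have hy : ∀ v ∈ List.ofFn b, QuadraticMap.polar Q v y = 0 := by
    intro v hv; obtain ⟨j, rfl⟩ := List.mem_ofFn.mp hv
    have hz : ∀ z ∈ Submodule.span K {v : M | v ∈ List.ofFn a},
        QuadraticMap.polar Q (b j) z = 0 := by
      intro z hz
      induction hz using Submodule.span_induction with
      | mem w hw =>
        obtain ⟨i, rfl⟩ := List.mem_ofFn.mp hw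
        rw [QuadraticMap.polar_comm]; exact hab i j
      | zero => exact QuadraticMap.polar_zero_right _ _
      | add u v _ _ hu hv => rw [QuadraticMap.polar_add_right, hu, hv, add_zero]
      | smul c u _ hu => rw [QuadraticMap.polar_smul_right, hu, smul_zero]
    rw [hy_def, QuadraticMap.polar_smul_right, hz _ hspan, smul_zero]
  have h2 : involute B * ι Q y * ⅟B = ι Q y := by
    have h0 : involute B * ι Q y = ι Q y * B := by rw [hB']; exact fix_aux _ hlB y hy
    rw [h0, mul_assoc, mul_invOf_self, mul_one]
  rw [hPA, invProj, h2, sub_self, smul_zero]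
end

section
/- Let A = ι(a₁)⋯ι(a_r) and B = ι(b₁)⋯ι(b_s) be invertible blades in Cl(Q) such that every aᵢ is orthogonal to every bⱼ, i.e. polar Q aᵢ bⱼ = 0 for all i, j (so that A·B = A ∧ B). Then for every vector x ∈ M, P_A(P_B(ι x)) = 0, where P_C(X) = (1/2)·(X - α(C)·X·C⁻¹). -/
open CliffordAlgebra

lemma involute_prod_mul_ι_of_ortho {K M : Type*} [Field K]
    [AddCommGroup M] [Module K M] {Q : QuadraticForm K M}
    (l : List M) (z : M) (h : ∀ v ∈ l, QuadraticMap.polar Q v z = 0) :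
    involute ((l.map (ι Q)).prod) * ι Q z = ι Q z * (l.map (ι Q)).prod := by
  induction l with
  | nil => simp
  | cons v l ih =>
    have hv : QuadraticMap.polar Q v z = 0 := h v List.mem_cons_self
    have ih' := ih fun w hw => h w (List.mem_cons_of_mem v hw)
    have hswap : ι Q v * ι Q z = - (ι Q z * ι Q v) := by
      have := CliffordAlgebra.ι_mul_ι_add_swap (Q := Q) v z
      rw [hv] at this
      simp only [map_zero] at this
      exact eq_neg_of_add_eq_zero_left this
    simp only [List.map_cons, List.prod_cons, map_mul, involute_ι]
    calc -ι Q v * involute ((l.map (ι Q)).prod) * ι Q z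
        = -ι Q v * (involute ((l.map (ι Q)).prod) * ι Q z) := by rw [mul_assoc]
      _ = -ι Q v * (ι Q z * (l.map (ι Q)).prod) := by rw [ih']
      _ = (-(ι Q v * ι Q z)) * (l.map (ι Q)).prod := by
          rw [neg_mul, neg_mul, mul_assoc]
      _ = ι Q z * (ι Q v * (l.map (ι Q)).prod) := by rw [hswap, neg_neg, mul_assoc]

lemma involute_prod_mul_ι {K M : Type*} [Field K]
    [AddCommGroup M] [Module K M] {Q : QuadraticForm K M}
    (l : List M) (x : M) (h : ∀ v ∈ l, Q v ≠ 0) :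
    ∃ y ∈ Submodule.span K {v | v ∈ l},
      involute ((l.map (ι Q)).prod) * ι Q x = ι Q (x - y) * (l.map (ι Q)).prod := by
  induction l with
  | nil => exact ⟨0, Submodule.zero_mem _, by simp⟩
  | cons v l ih =>
    obtain ⟨y, hy, hy'⟩ := ih fun w hw => h w (List.mem_cons_of_mem v hw)
    have hQv : Q v ≠ 0 := h v List.mem_cons_self
    set c : K := QuadraticMap.polar Q v (x - y) / Q v with hc
    refine ⟨y + c • v, ?_, ?_⟩
    · refine Submodule.add_mem _ (Submodule.span_mono ?_ hy)
        (Submodule.smul_mem _ _ (Submodule.subset_span (by simp)))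
      intro w hw; exact List.mem_cons_of_mem v hw
    · have key : -(ι Q v * ι Q (x - y)) = ι Q (x - y - c • v) * ι Q v := by
        have h1 := CliffordAlgebra.ι_mul_ι_add_swap (Q := Q) v (x - y)
        have h2 : (c • (ι Q v * ι Q v) : CliffordAlgebra Q)
            = algebraMap K _ (QuadraticMap.polar Q v (x - y)) := by
          rw [CliffordAlgebra.ι_sq_scalar, Algebra.smul_def, ← map_mul, hc,
            div_mul_cancel₀ _ hQv]
        calc -(ι Q v * ι Q (x - y))
            = ι Q (x - y) * ι Q v - algebraMap K _ (QuadraticMap.polar Q v (x - y)) := by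
              rw [← h1]; abel
          _ = ι Q (x - y) * ι Q v - c • (ι Q v * ι Q v) := by rw [h2]
          _ = (ι Q (x - y) - c • ι Q v) * ι Q v := by
              rw [sub_mul, smul_mul_assoc]
          _ = ι Q (x - y - c • v) * ι Q v := by simp
      simp only [List.map_cons, List.prod_cons, map_mul, involute_ι]
      calc -ι Q v * involute ((l.map (ι Q)).prod) * ι Q x
          = -ι Q v * (involute ((l.map (ι Q)).prod) * ι Q x) := by rw [mul_assoc]
        _ = -ι Q v * (ι Q (x - y) * (l.map (ι Q)).prod) := by rw [hy']
        _ = (-(ι Q v * ι Q (x - y))) * (l.map (ι Q)).prod := by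
            rw [neg_mul, neg_mul, mul_assoc]
        _ = ι Q (x - y - c • v) * (ι Q v * (l.map (ι Q)).prod) := by rw [key, mul_assoc]
        _ = ι Q (x - (y + c • v)) * (ι Q v * (l.map (ι Q)).prod) := by
            rw [sub_sub]

/-- If every vector of the blade `A` is orthogonal to every vector of the blade `B` (so `A·B = A ∧ B`), then `P_A(P_B(x)) = 0` for every vector `x`. -/
theorem invProj_invProj_eq_zero' {K M : Type*} [Field K] [Invertible (2 : K)]
    [AddCommGroup M] [Module K M] {Q : QuadraticForm K M}
    {r s : ℕ} (a : Fin r → M) (b : Fin s → M)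
    (A B : CliffordAlgebra Q) [Invertible A] [Invertible B]
    (hA : A = (List.ofFn fun i => ι Q (a i)).prod)
    (hB : B = (List.ofFn fun j => ι Q (b j)).prod)
    (ha : ∀ i j, i ≠ j → QuadraticMap.polar Q (a i) (a j) = 0)
    (hb : ∀ i j, i ≠ j → QuadraticMap.polar Q (b i) (b j) = 0)
    (haQ : ∀ i, Q (a i) ≠ 0) (hbQ : ∀ j, Q (b j) ≠ 0)
    (hab : ∀ i j, QuadraticMap.polar Q (a i) (b j) = 0)
    (x : M) :
    invProj A (invProj B (ι Q x)) = 0 := by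
  have hA' : A = (((List.ofFn a).map (ι Q)).prod) := by
    rw [hA, List.map_ofFn]; rfl
  have hB' : B = (((List.ofFn b).map (ι Q)).prod) := by
    rw [hB, List.map_ofFn]; rfl
  obtain ⟨y, hy, hy'⟩ := involute_prod_mul_ι (Q := Q) (List.ofFn b) x
    (fun w hw => by obtain ⟨j, rfl⟩ := List.mem_ofFn.mp hw; exact hbQ j)
  -- polar (a i) y = 0
  have hpol : ∀ i, QuadraticMap.polar Q (a i) y = 0 := by
    intro i
    have hle : Submodule.span K {v | v ∈ List.ofFn b}
        ≤ LinearMap.ker (QuadraticMap.polarBilin Q (a i)) := by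
      rw [Submodule.span_le]
      intro w hw
      obtain ⟨j, rfl⟩ := List.mem_ofFn.mp hw
      simpa using hab i j
    simpa using hle hy
  -- compute invProj B (ι x)
  have keyB : involute B * ι Q x = ι Q (x - y) * B := by
    rw [hB']; exact hy'
  have hBstep : invProj B (ι Q x) = ι Q (⅟(2:K) • y) := by
    rw [invProj, keyB, mul_assoc, mul_invOf_self, mul_one, map_sub,
      sub_sub_cancel, map_smul]
  rw [hBstep]
  have hcomm := involute_prod_mul_ι_of_ortho (Q := Q) (List.ofFn a) (⅟(2:K) • y)
    (fun w hw => by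
      obtain ⟨i, rfl⟩ := List.mem_ofFn.mp hw
      rw [QuadraticMap.polar_smul_right, hpol i, smul_zero])
  have keyA : involute A * ι Q (⅟(2:K) • y) = ι Q (⅟(2:K) • y) * A := by
    rw [hA']; exact hcomm
  rw [invProj, keyA, mul_assoc, mul_invOf_self, mul_one, sub_self, smul_zero]
end

section
/- Let A = ι(a₁)⋯ι(a_r) and B = ι(b₁)⋯ι(b_s) be invertible blades in Cl(Q) such that every aᵢ is orthogonal to every bⱼ, i.e. polar Q aᵢ bⱼ = 0 for all i, j (so that A·B = A ∧ B). Then for every vector x ∈ M, P_{A·B}(ι x) = P_A(ι x) + P_B(ι x), where P_C(X) = (1/2)·(X - α(C)·X·C⁻¹). -/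
open CliffordAlgebra

section Aux

variable {K M : Type*} [Field K] [AddCommGroup M] [Module K M] {Q : QuadraticForm K M}

lemma anticom_of_polar {u v : M} (h : QuadraticMap.polar Q u v = 0) :
    ι Q u * ι Q v = -(ι Q v * ι Q u) := by
  have := CliffordAlgebra.ι_mul_ι_add_swap (Q := Q) u v
  rw [h, map_zero] at this
  linear_combination (norm := noncomm_ring) this

lemma invProj_aux1 (l : List M) (X : CliffordAlgebra Q)
    (h : ∀ v ∈ l, ι Q v * X = -(X * ι Q v)) :
    involute ((l.map (ι Q)).prod) * X = X * (l.map (ι Q)).prod := by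
  induction l with
  | nil => simp
  | cons v l ih =>
    have hv := h v (List.mem_cons_self ..)
    have ih' := ih fun w hw => h w (List.mem_cons_of_mem _ hw)
    simp only [List.map_cons, List.prod_cons, map_mul, involute_ι]
    calc -ι Q v * involute ((l.map (ι Q)).prod) * X
        = -(ι Q v * (involute ((l.map (ι Q)).prod) * X)) := by noncomm_ring
      _ = -(ι Q v * (X * (l.map (ι Q)).prod)) := by rw [ih']
      _ = -(ι Q v * X) * (l.map (ι Q)).prod := by noncomm_ring
      _ = (X * ι Q v) * (l.map (ι Q)).prod := by rw [hv]; noncomm_ring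
      _ = X * (ι Q v * (l.map (ι Q)).prod) := by noncomm_ring

lemma invProj_aux2 (x : M) (l : List M)
    (hpair : l.Pairwise fun u v => QuadraticMap.polar Q u v = 0)
    (hQ : ∀ v ∈ l, Q v ≠ 0) :
    ∃ m : CliffordAlgebra Q,
      involute ((l.map (ι Q)).prod) * ι Q x = (ι Q x + m) * (l.map (ι Q)).prod ∧
      ∀ u : M, (∀ v ∈ l, QuadraticMap.polar Q u v = 0) → ι Q u * m = -(m * ι Q u) := by
  induction l with
  | nil => exact ⟨0, by simp, fun u _ => by simp⟩
  | cons v l ih =>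
    rw [List.pairwise_cons] at hpair
    obtain ⟨m, hm1, hm2⟩ := ih hpair.2 fun w hw => hQ w (List.mem_cons_of_mem _ hw)
    have hQv : Q v ≠ 0 := hQ v (List.mem_cons_self ..)
    set c : K := QuadraticMap.polar Q v x / Q v with hc
    refine ⟨m - c • ι Q v, ?_, ?_⟩
    · have key : -(ι Q v * (ι Q x + m)) = (ι Q x + (m - c • ι Q v)) * ι Q v := by
        have h1 : ι Q v * ι Q x = algebraMap K _ (QuadraticMap.polar Q v x) - ι Q x * ι Q v :=
          CliffordAlgebra.ι_mul_ι_comm v x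
        have h2 : ι Q v * m = -(m * ι Q v) := hm2 v hpair.1
        have h3 : algebraMap K (CliffordAlgebra Q) (QuadraticMap.polar Q v x)
            = c • (ι Q v * ι Q v) := by
          rw [CliffordAlgebra.ι_sq_scalar, Algebra.smul_def, ← map_mul, hc,
            div_mul_cancel₀ _ hQv]
        rw [mul_add, h1, h2, h3]
        noncomm_ring [smul_sub, sub_smul, smul_smul, mul_smul_comm, smul_mul_assoc]
      simp only [List.map_cons, List.prod_cons, map_mul, involute_ι]
      calc -ι Q v * involute ((l.map (ι Q)).prod) * ι Q x
          = -(ι Q v * (involute ((l.map (ι Q)).prod) * ι Q x)) := by noncomm_ring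
        _ = -(ι Q v * ((ι Q x + m) * (l.map (ι Q)).prod)) := by rw [hm1]
        _ = -(ι Q v * (ι Q x + m)) * (l.map (ι Q)).prod := by noncomm_ring
        _ = ((ι Q x + (m - c • ι Q v)) * ι Q v) * (l.map (ι Q)).prod := by rw [key]
        _ = (ι Q x + (m - c • ι Q v)) * (ι Q v * (l.map (ι Q)).prod) := by noncomm_ring
    · intro u hu
      have h1 : ι Q u * m = -(m * ι Q u) := hm2 u fun w hw => hu w (List.mem_cons_of_mem _ hw)
      have h2 : ι Q u * ι Q v = -(ι Q v * ι Q u) :=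
        anticom_of_polar (hu v (List.mem_cons_self ..))
      rw [mul_sub, h1, mul_smul_comm, h2]
      noncomm_ring [smul_sub, sub_smul, smul_smul, mul_smul_comm, smul_mul_assoc, smul_neg]

end Aux

/-- If every vector of the blade `A` is orthogonal to every vector of the blade `B` (so `A·B = A ∧ B`), then `P_{A·B}(x) = P_A(x) + P_B(x)` for every vector `x`. -/
theorem invProj_mul_eq_add {K M : Type*} [Field K] [Invertible (2 : K)]
    [AddCommGroup M] [Module K M] {Q : QuadraticForm K M}
    {r s : ℕ} (a : Fin r → M) (b : Fin s → M)
    (A B : CliffordAlgebra Q) [Invertible A] [Invertible B]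
    (hA : A = (List.ofFn fun i => ι Q (a i)).prod)
    (hB : B = (List.ofFn fun j => ι Q (b j)).prod)
    (ha : ∀ i j, i ≠ j → QuadraticMap.polar Q (a i) (a j) = 0)
    (hb : ∀ i j, i ≠ j → QuadraticMap.polar Q (b i) (b j) = 0)
    (haQ : ∀ i, Q (a i) ≠ 0) (hbQ : ∀ j, Q (b j) ≠ 0)
    (hab : ∀ i j, QuadraticMap.polar Q (a i) (b j) = 0)
    (x : M) :
    letI : Invertible (A * B) := invertibleMul A B
    invProj (A * B) (ι Q x) = invProj A (ι Q x) + invProj B (ι Q x) := by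
  letI : Invertible (A * B) := invertibleMul A B
  have hA' : A = ((List.ofFn a).map (ι Q)).prod := by rw [List.map_ofFn]; exact hA
  have hB' : B = ((List.ofFn b).map (ι Q)).prod := by rw [List.map_ofFn]; exact hB
  set X := ι Q x with hX
  -- obtain m for B
  obtain ⟨m, hm1, hm2⟩ := invProj_aux2 (Q := Q) x (List.ofFn b)
    (List.pairwise_ofFn.mpr fun i j hij => hb i j (Fin.ne_of_lt hij))
    (List.forall_mem_ofFn_iff.mpr hbQ)
  rw [← hB'] at hm1
  have hvB : involute B * X * ⅟B = X + m := by
    rw [hm1, mul_assoc, mul_invOf_self, mul_one]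
  have hAm : involute A * m = m * A := by
    rw [hA']
    exact invProj_aux1 _ m fun v hv => by
      obtain ⟨i, rfl⟩ := List.mem_ofFn.mp hv
      exact hm2 (a i) (List.forall_mem_ofFn_iff.mpr fun j => hab i j)
  have key : involute (A * B) * X * ⅟(A * B)
      = involute A * X * ⅟A + involute B * X * ⅟B - X := by
    rw [invOf_mul, map_mul]
    calc involute A * involute B * X * (⅟B * ⅟A)
        = involute A * (involute B * X * ⅟B) * ⅟A := by noncomm_ring
      _ = involute A * (X + m) * ⅟A := by rw [hvB]
      _ = involute A * X * ⅟A + (involute A * m) * ⅟A := by noncomm_ring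
      _ = involute A * X * ⅟A + m * (A * ⅟A) := by rw [hAm]; noncomm_ring
      _ = involute A * X * ⅟A + m := by rw [mul_invOf_self, mul_one]
      _ = involute A * X * ⅟A + involute B * X * ⅟B - X := by
          rw [hvB]; abel
  show invProj (A * B) X = invProj A X + invProj B X
  rw [invProj, invProj, invProj, key, ← smul_add]
  congr 1
  abel
end

section
/- Let A = ι(a₁)⋯ι(a_r) and B = ι(b₁)⋯ι(b_s) be invertible blades in Cl(Q) such that the span of {a₁,…,a_r} is contained in the span of {b₁,…,b_s} (so that A·B = A ⌟ B). Then for every vector x ∈ M, P_{A·B}(ι x) = P_B(ι x) - P_A(ι x), where P_C(X) = (1/2)·(X - α(C)·X·C⁻¹). -/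
/-!
Twisted conjugation `X ↦ α(B) X B⁻¹` by a blade `B` of pairwise orthogonal anisotropic vectors
maps `x` to its reflection `x'` through the span of `B`, so `x + x'` is orthogonal to that span,
hence to every factor of `A`, and `α(A)` commutes past it. Then
`α(AB) x (AB)⁻¹ = α(A) x' A⁻¹ = x + x' - α(A) x A⁻¹`.
-/

open CliffordAlgebra

section CommRing

variable {R M : Type*} [CommRing R] [AddCommGroup M] [Module R M] {Q : QuadraticForm R M}

theorem polar_eq_zero_of_mem_span {S : Set M} {v y : M} (hv : v ∈ Submodule.span R S)
    (h : ∀ m ∈ S, QuadraticMap.polar Q m y = 0) : QuadraticMap.polar Q v y = 0 := by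
  induction hv using Submodule.span_induction with
  | mem m hm => exact h m hm
  | zero => simp
  | add u w _ _ hu hw => rw [QuadraticMap.polar_add_left, hu, hw, add_zero]
  | smul c u _ hu => rw [QuadraticMap.polar_smul_left, hu, smul_zero]

theorem involute_prod_map_ι_mul_ι {l : List M} {y : M}
    (h : ∀ m ∈ l, QuadraticMap.polar Q m y = 0) :
    involute (l.map (ι Q)).prod * ι Q y = ι Q y * (l.map (ι Q)).prod := by
  induction l with
  | nil => simp
  | cons c t ih =>
    have hcy : ι Q c * ι Q y = -(ι Q y * ι Q c) :=
      ι_mul_ι_comm_of_isOrtho (QuadraticMap.isOrtho_polarBilin.mp (h c List.mem_cons_self))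
    have ht := ih fun m hm => h m (List.mem_cons_of_mem c hm)
    simp only [List.map_cons, List.prod_cons, map_mul, involute_ι]
    rw [mul_assoc, ht, neg_mul, ← mul_assoc, hcy, neg_mul, neg_neg, mul_assoc]

end CommRing

section Field

variable {K M : Type*} [Field K] [AddCommGroup M] [Module K M] {Q : QuadraticForm K M}

theorem neg_ι_mul_ι_eq_ι_mul_ι {c : M} (hc : Q c ≠ 0) (y : M) :
    -(ι Q c * ι Q y) = ι Q (y - (QuadraticMap.polar Q c y / Q c) • c) * ι Q c := by
  rw [map_sub, map_smul, sub_mul, smul_mul_assoc, ι_sq_scalar, Algebra.smul_def,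
    ← (algebraMap K _).map_mul, div_mul_cancel₀ _ hc, ι_mul_ι_comm c y, neg_sub]

theorem exists_involute_prod_map_ι_mul_ι {l : List M}
    (hl : l.Pairwise fun u v => QuadraticMap.polar Q u v = 0) (hQ : ∀ m ∈ l, Q m ≠ 0) (x : M) :
    ∃ x' : M, involute (l.map (ι Q)).prod * ι Q x = ι Q x' * (l.map (ι Q)).prod ∧
      x - x' ∈ Submodule.span K {m | m ∈ l} ∧
      ∀ m ∈ l, QuadraticMap.polar Q m (x + x') = 0 := by
  induction l with
  | nil => exact ⟨x, by simp, by simp, by simp⟩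
  | cons c t ih =>
    obtain ⟨hct, ht⟩ := List.pairwise_cons.mp hl
    have hc : Q c ≠ 0 := hQ c List.mem_cons_self
    obtain ⟨x₁, hcomm, hspan, horth⟩ := ih ht fun m hm => hQ m (List.mem_cons_of_mem c hm)
    set k := QuadraticMap.polar Q c x₁ / Q c
    refine ⟨x₁ - k • c, ?_, ?_, ?_⟩
    · simp only [List.map_cons, List.prod_cons, map_mul, involute_ι]
      rw [mul_assoc, hcomm, ← mul_assoc, neg_mul, neg_ι_mul_ι_eq_ι_mul_ι hc, mul_assoc]
    · have hspan' := Submodule.span_mono (fun m hm => List.mem_cons_of_mem c hm) hspan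
      have hc_mem : k • c ∈ Submodule.span K {m | m ∈ c :: t} :=
        Submodule.smul_mem _ k (Submodule.subset_span List.mem_cons_self)
      rw [show x - (x₁ - k • c) = x - x₁ + k • c by abel]
      exact add_mem hspan' hc_mem
    · rintro m (_ | ⟨_, hm⟩)
      · -- `c ⊥ t` and `x - x₁ ∈ span t`, so `x` and `x₁` pair equally with `c`
        have hx : QuadraticMap.polar Q c (x - x₁) = 0 := by
          rw [QuadraticMap.polar_comm]
          exact polar_eq_zero_of_mem_span hspan fun m hm => by
            rw [QuadraticMap.polar_comm]; exact hct m hm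
        rw [QuadraticMap.polar_sub_right] at hx
        rw [QuadraticMap.polar_add_right, QuadraticMap.polar_sub_right,
          QuadraticMap.polar_smul_right, QuadraticMap.polar_self, two_nsmul, smul_eq_mul, mul_add,
          div_mul_cancel₀ _ hc]
        linear_combination hx
      · rw [add_sub_assoc', QuadraticMap.polar_sub_right, horth m hm,
          QuadraticMap.polar_smul_right, QuadraticMap.polar_comm, hct m hm, smul_zero, sub_zero]

theorem invProj_mul_eq_sub_of_involute_mul [Invertible (2 : K)]
    {A B : CliffordAlgebra Q} [Invertible A] [Invertible B] {X Y : CliffordAlgebra Q}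
    (hB : involute B * X = Y * B) (hA : involute A * (X + Y) = (X + Y) * A) :
    letI : Invertible (A * B) := invertibleMul A B
    invProj (A * B) X = invProj B X - invProj A X := by
  let : Invertible (A * B) := invertibleMul A B
  have hBY : involute B * X * ⅟B = Y := by rw [hB, mul_invOf_cancel_right]
  have hAY : involute A * Y * ⅟A = X + Y - involute A * X * ⅟A := by
    rw [eq_sub_iff_add_eq', ← add_mul, ← mul_add, hA, mul_invOf_cancel_right]
  have hAB : involute (A * B) * X * ⅟(A * B) = X + Y - involute A * X * ⅟A := by
    rw [invOf_mul, map_mul, ← hAY, ← hBY]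
    noncomm_ring
  simp only [invProj, hAB, hBY]
  module

end Field

theorem invProj_mul_eq_sub_general {K M : Type*} [Field K] [Invertible (2 : K)]
    [AddCommGroup M] [Module K M] {Q : QuadraticForm K M}
    {r s : ℕ} (a : Fin r → M) (b : Fin s → M)
    (A B : CliffordAlgebra Q) [Invertible A] [Invertible B]
    (hA : A = (List.ofFn fun i => ι Q (a i)).prod)
    (hB : B = (List.ofFn fun j => ι Q (b j)).prod)
    (hb : ∀ i j, i ≠ j → QuadraticMap.polar Q (b i) (b j) = 0)
    (hbQ : ∀ j, Q (b j) ≠ 0)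
    (hspan : Submodule.span K (Set.range a) ≤ Submodule.span K (Set.range b))
    (x : M) :
    letI : Invertible (A * B) := invertibleMul A B
    invProj (A * B) (ι Q x) = invProj B (ι Q x) - invProj A (ι Q x) := by
  replace hA : A = ((List.ofFn a).map (ι Q)).prod := by rw [hA, List.map_ofFn]; rfl
  replace hB : B = ((List.ofFn b).map (ι Q)).prod := by rw [hB, List.map_ofFn]; rfl
  obtain ⟨x', hBx, -, horth⟩ := exists_involute_prod_map_ι_mul_ι
    (List.pairwise_ofFn.mpr fun i j hij => hb i j hij.ne)
    (fun m hm => by obtain ⟨j, rfl⟩ := List.mem_ofFn.mp hm; exact hbQ j) x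
  have horth_a : ∀ m ∈ List.ofFn a, QuadraticMap.polar Q m (x + x') = 0 := by
    intro m hm
    obtain ⟨i, rfl⟩ := List.mem_ofFn.mp hm
    refine polar_eq_zero_of_mem_span (hspan (Submodule.subset_span ⟨i, rfl⟩)) ?_
    rintro _ ⟨j, rfl⟩
    exact horth _ (List.mem_ofFn.mpr ⟨j, rfl⟩)
  refine invProj_mul_eq_sub_of_involute_mul (Y := ι Q x') (hB ▸ hBx) ?_
  rw [← map_add, hA]
  exact involute_prod_map_ι_mul_ι horth_a

/-- If the span of the blade `A` is contained in that of the blade `B` (so `A·B = A ⌟ B`), then `P_{A·B}(x) = P_B(x) - P_A(x)` for every vector `x`. -/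
theorem invProj_mul_eq_sub {K M : Type*} [Field K] [Invertible (2 : K)]
    [AddCommGroup M] [Module K M] {Q : QuadraticForm K M}
    {r s : ℕ} (a : Fin r → M) (b : Fin s → M)
    (A B : CliffordAlgebra Q) [Invertible A] [Invertible B]
    (hA : A = (List.ofFn fun i => ι Q (a i)).prod)
    (hB : B = (List.ofFn fun j => ι Q (b j)).prod)
    (ha : ∀ i j, i ≠ j → QuadraticMap.polar Q (a i) (a j) = 0)
    (hb : ∀ i j, i ≠ j → QuadraticMap.polar Q (b i) (b j) = 0)
    (haQ : ∀ i, Q (a i) ≠ 0) (hbQ : ∀ j, Q (b j) ≠ 0)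
    (hspan : Submodule.span K (Set.range a) ≤ Submodule.span K (Set.range b))
    (x : M) :
    letI : Invertible (A * B) := invertibleMul A B
    invProj (A * B) (ι Q x) = invProj B (ι Q x) - invProj A (ι Q x) :=
  invProj_mul_eq_sub_general a b A B hA hB hb hbQ hspan x
end

section
/- Let A = ι(a₁)⋯ι(a_r) and B = ι(b₁)⋯ι(b_s) be invertible blades in Cl(Q) such that the span of {a₁,…,a_r} is contained in the span of {b₁,…,b_s} (so that A·B = A ⌟ B). Then for every vector x ∈ M, P_A(P_B(ι x)) = P_A(ι x), where P_C(X) = (1/2)·(X - α(C)·X·C⁻¹). -/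
/-!
For a vector `x`, conjugation `α(C) · ι x · C⁻¹` by a blade `C = ι c₁ ⋯ ι cₖ` is `ι (R_C x)`,
with `R_C` the composite of the reflections along the `cᵢ`, so `ι x - P_B(ι x) = ½ ι (x + R_B x)`. Since the
`bⱼ` are pairwise orthogonal, `x + R_B x` is orthogonal to every `bⱼ`, hence to the span of the
`bⱼ` and so to every `aᵢ`. A vector orthogonal to every `aᵢ` anticommutes with each `ι aᵢ`, i.e.
`α(A) · ι y = ι y · A`, and is therefore killed by `P_A`; as `P_A` is linear,
`P_A(P_B(ι x)) = P_A(ι x)`.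
-/

open CliffordAlgebra QuadraticMap

section Reflection

variable {K M : Type*} [Field K] [AddCommGroup M] [Module K M] {Q : QuadraticForm K M}

variable (Q) in
noncomputable def reflectAlong (v x : M) : M :=
  x - ((Q v)⁻¹ * polar Q x v) • v

variable (Q) in
noncomputable def reflectAlongList (l : List M) (x : M) : M :=
  l.foldr (reflectAlong Q) x

@[simp]
lemma reflectAlongList_nil (x : M) : reflectAlongList Q [] x = x := rfl

lemma reflectAlongList_cons (v : M) (l : List M) (x : M) :
    reflectAlongList Q (v :: l) x = reflectAlong Q v (reflectAlongList Q l x) := rfl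

lemma polar_reflectAlongList_of_forall_polar_eq_zero (l : List M) (v x : M)
    (h : ∀ w ∈ l, polar Q w v = 0) :
    polar Q (reflectAlongList Q l x) v = polar Q x v := by
  induction l with
  | nil => rfl
  | cons w l ih =>
    rw [reflectAlongList_cons, reflectAlong, polar_sub_left, polar_smul_left, h w (.head _),
      smul_zero, sub_zero, ih fun u hu => h u (.tail _ hu)]

lemma polar_add_reflectAlongList_eq_zero (l : List M)
    (hl : l.Pairwise fun u v => polar Q u v = 0) (hQ : ∀ v ∈ l, Q v ≠ 0) (x : M) :
    ∀ v ∈ l, polar Q (x + reflectAlongList Q l x) v = 0 := by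
  induction l with
  | nil => simp
  | cons w l ih =>
    obtain ⟨hw, hl⟩ := List.pairwise_cons.mp hl
    intro v hv
    rcases List.mem_cons.mp hv with rfl | hv
    · have hfix : polar Q (reflectAlongList Q l x) v = polar Q x v :=
        polar_reflectAlongList_of_forall_polar_eq_zero l v x fun u hu => polar_comm Q v u ▸ hw u hu
      have hv : Q v ≠ 0 := hQ v (.head _)
      rw [reflectAlongList_cons, reflectAlong, ← add_sub_assoc, polar_sub_left, polar_smul_left,
        polar_add_left, hfix, polar_self, nsmul_eq_mul, smul_eq_mul]
      field_simp
      ring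
    · rw [reflectAlongList_cons, reflectAlong, ← add_sub_assoc, polar_sub_left, polar_smul_left,
        hw v hv, smul_zero, sub_zero, ih hl (fun u hu => hQ u (.tail _ hu)) v hv]

end Reflection

section Conjugation

variable {K M : Type*} [Field K] [AddCommGroup M] [Module K M] {Q : QuadraticForm K M}

lemma involute_ι_mul_ι {v : M} (hv : Q v ≠ 0) (x : M) :
    involute (ι Q v) * ι Q x = ι Q (reflectAlong Q v x) * ι Q v := by
  have hcoef : ((Q v)⁻¹ * polar Q x v) • (ι Q v * ι Q v) =
      algebraMap K (CliffordAlgebra Q) (polar Q x v) := by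
    rw [ι_sq_scalar, Algebra.smul_def, ← map_mul, mul_right_comm, inv_mul_cancel₀ hv, one_mul]
  rw [involute_ι, reflectAlong, map_sub, map_smul, sub_mul, smul_mul_assoc, hcoef, polar_comm,
    ← ι_mul_ι_add_swap, neg_mul]
  abel

lemma involute_prod_mul_ι_s9 (l : List M) (hQ : ∀ v ∈ l, Q v ≠ 0) (x : M) :
    involute (l.map (ι Q)).prod * ι Q x = ι Q (reflectAlongList Q l x) * (l.map (ι Q)).prod := by
  induction l with
  | nil => simp
  | cons v l ih =>
    rw [List.map_cons, List.prod_cons, map_mul, mul_assoc, ih fun w hw => hQ w (.tail _ hw),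
      ← mul_assoc, involute_ι_mul_ι (hQ v (.head _)), reflectAlongList_cons, mul_assoc]

lemma involute_prod_mul_ι_of_forall_polar_eq_zero (l : List M) {y : M}
    (hy : ∀ v ∈ l, polar Q y v = 0) :
    involute (l.map (ι Q)).prod * ι Q y = ι Q y * (l.map (ι Q)).prod := by
  induction l with
  | nil => simp
  | cons v l ih =>
    have hanti : ι Q v * ι Q y = -(ι Q y * ι Q v) := by
      rw [eq_neg_iff_add_eq_zero, ι_mul_ι_add_swap, polar_comm, hy v (.head _), map_zero]
    rw [List.map_cons, List.prod_cons, map_mul, mul_assoc, ih fun w hw => hy w (.tail _ hw),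
      ← mul_assoc, involute_ι, neg_mul, hanti, neg_neg, mul_assoc]

end Conjugation

section InvProj

variable {K M : Type*} [Field K] [Invertible (2 : K)] [AddCommGroup M] [Module K M]
  {Q : QuadraticForm K M}

lemma ι_sub_invProj_ι_of_eq_prod {l : List M} (hQ : ∀ v ∈ l, Q v ≠ 0)
    (C : CliffordAlgebra Q) [Invertible C] (hC : C = (l.map (ι Q)).prod) (x : M) :
    ι Q x - invProj C (ι Q x) = ⅟(2 : K) • ι Q (x + reflectAlongList Q l x) := by
  have hconj : involute C * ι Q x * ⅟C = ι Q (reflectAlongList Q l x) := by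
    subst hC
    rw [involute_prod_mul_ι_s9 l hQ, mul_invOf_cancel_right]
  have hhalves : ι Q x = ⅟(2 : K) • ι Q x + ⅟(2 : K) • ι Q x := by
    rw [← add_smul, invOf_two_add_invOf_two, one_smul]
  rw [invProj, hconj, map_add, smul_sub, smul_add]
  nth_rewrite 1 [hhalves]
  abel

lemma invProj_sub_of_involute_mul_eq (A : CliffordAlgebra Q) [Invertible A]
    {Y : CliffordAlgebra Q} (hY : involute A * Y = Y * A) (X : CliffordAlgebra Q) :
    invProj A (X - Y) = invProj A X := by
  rw [invProj, invProj, mul_sub, sub_mul, hY, mul_invOf_cancel_right, sub_sub_sub_cancel_right]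

end InvProj

theorem invProj_invProj_eq_left_general {K M : Type*} [Field K] [Invertible (2 : K)]
    [AddCommGroup M] [Module K M] {Q : QuadraticForm K M}
    {r s : ℕ} (a : Fin r → M) (b : Fin s → M)
    (A B : CliffordAlgebra Q) [Invertible A] [Invertible B]
    (hA : A = (List.ofFn fun i => ι Q (a i)).prod)
    (hB : B = (List.ofFn fun j => ι Q (b j)).prod)
    (hb : ∀ i j, i ≠ j → QuadraticMap.polar Q (b i) (b j) = 0)
    (hbQ : ∀ j, Q (b j) ≠ 0)
    (hspan : Submodule.span K (Set.range a) ≤ Submodule.span K (Set.range b))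
    (x : M) :
    invProj A (invProj B (ι Q x)) = invProj A (ι Q x) := by
  replace hA : A = ((List.ofFn a).map (ι Q)).prod := by rw [hA, List.map_ofFn]; rfl
  replace hB : B = ((List.ofFn b).map (ι Q)).prod := by rw [hB, List.map_ofFn]; rfl
  set y := x + reflectAlongList Q (List.ofFn b) x
  have hyb : ∀ j, polar Q y (b j) = 0 := fun j =>
    polar_add_reflectAlongList_eq_zero _ (List.pairwise_ofFn.mpr fun i j hij => hb i j hij.ne)
      (List.forall_mem_ofFn_iff.mpr hbQ) x _ (List.mem_ofFn.mpr ⟨j, rfl⟩)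
  have hya : ∀ v ∈ List.ofFn a, polar Q y v = 0 := by
    have hker : Submodule.span K (Set.range b) ≤ LinearMap.ker (polarBilin Q y) :=
      Submodule.span_le.mpr (Set.range_subset_iff.mpr hyb)
    exact List.forall_mem_ofFn_iff.mpr fun i => hker (hspan (Submodule.subset_span ⟨i, rfl⟩))
  have hPB : invProj B (ι Q x) = ι Q x - ⅟(2 : K) • ι Q y := by
    rw [← ι_sub_invProj_ι_of_eq_prod (List.forall_mem_ofFn_iff.mpr hbQ) B hB, sub_sub_cancel]
  have hcomm : involute A * (⅟(2 : K) • ι Q y) = ⅟(2 : K) • ι Q y * A := by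
    rw [mul_smul_comm, smul_mul_assoc, hA, involute_prod_mul_ι_of_forall_polar_eq_zero _ hya]
  rw [hPB, invProj_sub_of_involute_mul_eq A hcomm]

/-- If the span of the blade `A` is contained in that of the blade `B` (so `A·B = A ⌟ B`), then `P_A(P_B(x)) = P_A(x)` for every vector `x`. -/
theorem invProj_invProj_eq_left {K M : Type*} [Field K] [Invertible (2 : K)]
    [AddCommGroup M] [Module K M] {Q : QuadraticForm K M}
    {r s : ℕ} (a : Fin r → M) (b : Fin s → M)
    (A B : CliffordAlgebra Q) [Invertible A] [Invertible B]
    (hA : A = (List.ofFn fun i => ι Q (a i)).prod)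
    (hB : B = (List.ofFn fun j => ι Q (b j)).prod)
    (ha : ∀ i j, i ≠ j → QuadraticMap.polar Q (a i) (a j) = 0)
    (hb : ∀ i j, i ≠ j → QuadraticMap.polar Q (b i) (b j) = 0)
    (haQ : ∀ i, Q (a i) ≠ 0) (hbQ : ∀ j, Q (b j) ≠ 0)
    (hspan : Submodule.span K (Set.range a) ≤ Submodule.span K (Set.range b))
    (x : M) :
    invProj A (invProj B (ι Q x)) = invProj A (ι Q x) :=
  invProj_invProj_eq_left_general a b A B hA hB hb hbQ hspan x
end
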